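/- arXiv:quant-ph/0209166 — 2 statements merged into one kernel-verified Lean document; each statement's English description precedes it below -/
import Mathlib

section
/- Let x, y ∈ ℝᴺ. If x is supermajorized by y (x ≺^w y), then there exists u ∈ ℝᴺ with x_i ≥ u_i for every i = 1,…,N such that u is majorized by y (u ≺ y). -/
/-- The decreasing rearrangement `x↓` of a vector `x ∈ ℝᴺ`. -/
noncomputable def decRearrange {N : ℕ} (x : Fin N → ℝ) : Fin N → ℝ :=
  fun i => x (Tuple.sort x i.rev)

/-- `∑_{i=1}^{k} x↓_i`, the sum of the `k` largest entries of `x` (0-indexed: indices `< k`). -/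
noncomputable def topSum {N : ℕ} (x : Fin N → ℝ) (k : ℕ) : ℝ :=
  ∑ i ∈ Finset.univ.filter (fun i : Fin N => (i : ℕ) < k), decRearrange x i

/-- `∑_{i=l+1}^{N} x↓_i` (1-indexed), i.e. the sum of `x↓_i` over 0-indexed indices `i ≥ l`. -/
noncomputable def botSum {N : ℕ} (x : Fin N → ℝ) (l : ℕ) : ℝ :=
  ∑ i ∈ Finset.univ.filter (fun i : Fin N => l ≤ (i : ℕ)), decRearrange x i

/-- `x ≺ y` : `x` is majorized by `y`. -/
noncomputable def IsMajorizedBy {N : ℕ} (x y : Fin N → ℝ) : Prop :=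
  (∀ k : ℕ, topSum x k ≤ topSum y k) ∧ (∑ i, x i = ∑ i, y i)

/-- `x ≺_w y` : `x` is submajorized (weakly majorized from below) by `y`. -/
noncomputable def IsSubmajorizedBy {N : ℕ} (x y : Fin N → ℝ) : Prop :=
  ∀ k : ℕ, topSum x k ≤ topSum y k

/-- `x ≺^w y` : `x` is supermajorized (weakly majorized from above) by `y`:
`∑_{i=l}^{N} x↓_i ≥ ∑_{i=l}^{N} y↓_i` for all `l`. -/
noncomputable def IsSupermajorizedBy {N : ℕ} (x y : Fin N → ℝ) : Prop :=
  ∀ l : ℕ, botSum y l ≤ botSum x l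

/-!
Truncate `x` at the level `a` for which `∑ min (xᵢ, a) = ∑ yᵢ` (intermediate value theorem; the
inequality `∑ y ≤ ∑ x` is supermajorization at `l = 0`), and let `u = min (x, a)`, so that
`u↓ = min (x↓, a)`. If every `x↓ᵢ` with `i ≥ k` is at most `a`, the bottom sums of `u` and `x`
from `k` on coincide, and supermajorization together with `∑ u = ∑ y` bounds the top sum of `u`.
Otherwise, by downward induction on `k`: `u↓ᵢ = a` for all `i ≤ k`, so the top sums of `u` up to
`k` and `k + 1` are `k a` and `(k + 1) a`, and the bound at `k + 1` passes down to `k` because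
the top sums of `y↓` satisfy `k ∑_{i ≤ k} y↓ᵢ ≤ (k + 1) ∑_{i < k} y↓ᵢ`.
-/

open Finset

section Rearrangement

variable {N : ℕ}

lemma antitone_decRearrange (x : Fin N → ℝ) : Antitone (decRearrange x) :=
  fun _ _ hij => Tuple.monotone_sort x (Fin.rev_le_rev.mpr hij)

lemma sum_decRearrange (x : Fin N → ℝ) : ∑ i, decRearrange x i = ∑ i, x i :=
  Equiv.sum_comp (Fin.revPerm.trans (Tuple.sort x)) x

lemma decRearrange_eq_comp_of_antitone {x : Fin N → ℝ} {σ : Equiv.Perm (Fin N)}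
    (h : Antitone (x ∘ σ)) : decRearrange x = x ∘ σ := by
  have hsort : x ∘ (Fin.revPerm.trans σ) = x ∘ Tuple.sort x :=
    Tuple.comp_sort_eq_comp_iff_monotone.mpr fun _ _ hij => h (Fin.rev_le_rev.mpr hij)
  funext i
  simpa [decRearrange] using (congrFun hsort i.rev).symm

lemma decRearrange_comp_of_monotone {f : ℝ → ℝ} (hf : Monotone f) (x : Fin N → ℝ) :
    decRearrange (f ∘ x) = f ∘ decRearrange x :=
  decRearrange_eq_comp_of_antitone (σ := Fin.revPerm.trans (Tuple.sort x))
    (hf.comp_antitone (antitone_decRearrange x))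

lemma card_filter_val_lt {k : ℕ} (hk : k ≤ N) : #{i : Fin N | (i : ℕ) < k} = k :=
  Fin.card_filter_val_lt.trans (min_eq_right hk)

end Rearrangement

section PartialSums

variable {N : ℕ}

lemma botSum_zero (x : Fin N → ℝ) : botSum x 0 = ∑ i, x i := by
  simp [botSum, sum_decRearrange]

lemma topSum_add_botSum (x : Fin N → ℝ) (k : ℕ) : topSum x k + botSum x k = ∑ i, x i := by
  simp only [topSum, botSum, ← not_lt]
  rw [sum_filter_add_sum_filter_not, sum_decRearrange]

lemma topSum_succ (x : Fin N → ℝ) {k : ℕ} (hk : k < N) :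
    topSum x (k + 1) = topSum x k + decRearrange x ⟨k, hk⟩ := by
  have hinsert : univ.filter (fun i : Fin N => (i : ℕ) < k + 1) =
      insert ⟨k, hk⟩ (univ.filter fun i : Fin N => (i : ℕ) < k) := by
    ext i
    simp [Fin.ext_iff, le_iff_eq_or_lt]
  rw [topSum, hinsert, sum_insert (by simp), add_comm, topSum]

lemma topSum_eq_mul_of_forall_lt {x : Fin N → ℝ} {k : ℕ} (hk : k ≤ N) {a : ℝ}
    (hx : ∀ i : Fin N, (i : ℕ) < k → decRearrange x i = a) : topSum x k = k * a := by
  rw [topSum, sum_congr rfl fun i hi => hx i (mem_filter.mp hi).2,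
    sum_const, card_filter_val_lt hk, nsmul_eq_mul]

lemma mul_decRearrange_le_topSum (x : Fin N → ℝ) (i : Fin N) :
    i * decRearrange x i ≤ topSum x i := by
  have h := card_nsmul_le_sum {j : Fin N | (j : ℕ) < i} (decRearrange x) (decRearrange x i)
    fun j hj => antitone_decRearrange x (Fin.le_of_lt (mem_filter.mp hj).2)
  rwa [card_filter_val_lt i.isLt.le, nsmul_eq_mul] at h

lemma sum_le_sum_of_isSupermajorizedBy {x y : Fin N → ℝ} (h : IsSupermajorizedBy x y) :
    ∑ i, y i ≤ ∑ i, x i := by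
  simpa only [botSum_zero] using h 0

end PartialSums

lemma exists_sum_min_eq {ι : Type*} [Fintype ι] [Nonempty ι] (x : ι → ℝ) {t : ℝ}
    (ht : t ≤ ∑ i, x i) : ∃ a : ℝ, ∑ i, min (x i) a = t := by
  obtain ⟨M, hM⟩ := (Set.finite_range x).bddAbove
  have hcard : (Fintype.card ι : ℝ) ≠ 0 := by positivity
  refine mem_range_of_exists_le_of_exists_ge
    (continuous_finsetSum _ fun i _ => continuous_const.min continuous_id)
    ⟨t / Fintype.card ι, ?_⟩ ⟨M, ?_⟩
  · calc ∑ i, min (x i) (t / Fintype.card ι) ≤ ∑ _i : ι, t / Fintype.card ι :=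
          sum_le_sum fun i _ => min_le_right _ _
      _ = t := by rw [sum_const, card_univ, nsmul_eq_mul, mul_div_cancel₀ _ hcard]
  · simpa [min_eq_left (hM (Set.mem_range_self _))] using ht

section Truncation

variable {N : ℕ} {x y : Fin N → ℝ} {a : ℝ}

lemma decRearrange_min_const (x : Fin N → ℝ) (a : ℝ) :
    decRearrange (fun i => min (x i) a) = fun i => min (decRearrange x i) a :=
  decRearrange_comp_of_monotone (f := fun t => min t a) (fun _ _ h => min_le_min_right a h) x

lemma topSum_min_le_of_tail_le (h : IsSupermajorizedBy x y)
    (hsum : ∑ i, min (x i) a = ∑ i, y i) {k : ℕ}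
    (htail : ∀ i : Fin N, k ≤ (i : ℕ) → decRearrange x i ≤ a) :
    topSum (fun i => min (x i) a) k ≤ topSum y k := by
  have hbot : botSum (fun i => min (x i) a) k = botSum x k := by
    rw [botSum, decRearrange_min_const]
    exact sum_congr rfl fun i hi => min_eq_left (htail i (mem_filter.mp hi).2)
  have hu := topSum_add_botSum (fun i => min (x i) a) k
  have hy := topSum_add_botSum y k
  linarith [h k]

lemma topSum_min_le_of_lt_decRearrange {k : ℕ} (hk : k < N) (hlt : a < decRearrange x ⟨k, hk⟩)
    (hnext : topSum (fun i => min (x i) a) (k + 1) ≤ topSum y (k + 1)) :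
    topSum (fun i => min (x i) a) k ≤ topSum y k := by
  have hconst : ∀ i : Fin N, (i : ℕ) < k + 1 → decRearrange (fun i => min (x i) a) i = a := by
    intro i hi
    rw [decRearrange_min_const]
    exact min_eq_right (hlt.le.trans (antitone_decRearrange x (Fin.mk_le_mk.mpr (by omega))))
  rw [topSum_eq_mul_of_forall_lt hk.le fun i hi => hconst i (by omega)]
  rw [topSum_eq_mul_of_forall_lt hk hconst, topSum_succ y hk] at hnext
  have hlast := mul_decRearrange_le_topSum y ⟨k, hk⟩
  push_cast at hnext hlast
  -- `k (k + 1) a ≤ k (topSum y k + y↓ₖ) ≤ (k + 1) topSum y k`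
  have hscaled : ((k : ℝ) + 1) * (k * a) ≤ ((k : ℝ) + 1) * topSum y k := by
    nlinarith [(Nat.cast_nonneg k : (0 : ℝ) ≤ k)]
  exact le_of_mul_le_mul_left hscaled (by positivity)

theorem topSum_min_le_of_isSupermajorizedBy (h : IsSupermajorizedBy x y)
    (hsum : ∑ i, min (x i) a = ∑ i, y i) (k : ℕ) :
    topSum (fun i => min (x i) a) k ≤ topSum y k := by
  by_cases htail : ∀ i : Fin N, k ≤ (i : ℕ) → decRearrange x i ≤ a
  · exact topSum_min_le_of_tail_le h hsum htail
  · push Not at htail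
    obtain ⟨i, hki, hai⟩ := htail
    have hk : k < N := hki.trans_lt i.isLt
    exact topSum_min_le_of_lt_decRearrange hk
      (hai.trans_le (antitone_decRearrange x (Fin.mk_le_mk.mpr hki)))
      (topSum_min_le_of_isSupermajorizedBy h hsum (k + 1))
termination_by N - k

end Truncation

/-- **Lemma 2, converse direction.** If `x ≺^w y` then there is `u` with `xᵢ ≥ uᵢ` for all `i`
such that `u ≺ y`. -/
theorem supermajorized_exists_pointwise_le_majorized {N : ℕ} (x y : Fin N → ℝ)
    (h : IsSupermajorizedBy x y) :
    ∃ u : Fin N → ℝ, (∀ i, u i ≤ x i) ∧ IsMajorizedBy u y := by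
  rcases isEmpty_or_nonempty (Fin N) with _ | _
  · exact ⟨y, isEmptyElim, fun _ => le_rfl, rfl⟩
  obtain ⟨a, ha⟩ := exists_sum_min_eq x (sum_le_sum_of_isSupermajorizedBy h)
  exact ⟨fun i => min (x i) a, fun i => min_le_left _ _,
    topSum_min_le_of_isSupermajorizedBy h ha, ha⟩
end

section
/- Let Q and B be n×m complex matrices with SVDs Q = X_Q Σ_Q Y_Q and B = X_B Σ_B Y_B, and let p > 0 satisfy σ_i(Q)² ≥ p·σ_i(B)² for every i, where σ₁ ≥ σ₂ ≥ … are the singular values in decreasing order. Then N := √p X_B Σ_B Σ_Q‡ X_Q† is a contraction, and with the unitary V defined by Vᵀ = Y_Q† Y_B one has N Q Vᵀ = √p B; i.e., (N ⊗ V)|Q⟩⟩ = √p |B⟩⟩, a pure LOCC transformation of |Q⟩⟩ into |B⟩⟩ occurring with probability p. -/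
/-!
Substituting the SVDs, the unitary factors cancel and `N Q Vᵀ = X_B (√p Σ_B Σ_Q‡ Σ_Q) Y_B`,
where `√p Σ_B Σ_Q‡ Σ_Q = √p Σ_B` because `σᵢ(Q) = 0` forces `σᵢ(B) = 0`. The matrix `N` is
the diagonal matrix `√p Σ_B Σ_Q‡`, with entries `√p σᵢ(B) / σᵢ(Q)` of modulus at most `1`,
between two unitaries, and the L2 operator norm of a diagonal matrix is the largest modulus
of its entries.
-/

open Matrix

/-- `M` is a contraction: its operator norm (as an operator on `EuclideanSpace ℂ (Fin n)`,
i.e. the l2 operator norm) is at most 1. -/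
def IsContraction {n : ℕ} (M : Matrix (Fin n) (Fin n) ℂ) : Prop :=
  ‖Matrix.toEuclideanCLM (𝕜 := ℂ) M‖ ≤ 1

/-- The `n × m` "diagonal" matrix with `σ 0, σ 1, …` on the main diagonal. -/
def svdDiag (n m : ℕ) (σ : ℕ → ℝ) : Matrix (Fin n) (Fin m) ℂ :=
  Matrix.of fun i j => if (i : ℕ) = (j : ℕ) then (σ (i : ℕ) : ℂ) else 0

/-- The Moore–Penrose pseudoinverse of `svdDiag n m σ`: diagonal with entries `σᵢ⁻¹`
where `σᵢ ≠ 0` and `0` where `σᵢ = 0` (note `(0 : ℝ)⁻¹ = 0`). -/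
noncomputable def svdDiagPinv (n m : ℕ) (σ : ℕ → ℝ) : Matrix (Fin m) (Fin n) ℂ :=
  Matrix.of fun i j => if (i : ℕ) = (j : ℕ) then ((σ (i : ℕ))⁻¹ : ℂ) else 0

/-- `O = X Σ Y` is a singular value decomposition of `O` : `X`, `Y` unitary and `Σ` the
diagonal matrix of the singular values `σ 0 ≥ σ 1 ≥ … ≥ 0` in decreasing order
(padded with zeros beyond `min n m`). -/
def IsSVD {n m : ℕ} (O : Matrix (Fin n) (Fin m) ℂ) (X : Matrix (Fin n) (Fin n) ℂ)
    (σ : ℕ → ℝ) (Y : Matrix (Fin m) (Fin m) ℂ) : Prop :=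
  X ∈ Matrix.unitaryGroup (Fin n) ℂ ∧ Y ∈ Matrix.unitaryGroup (Fin m) ℂ ∧
  (∀ i, 0 ≤ σ i) ∧ Antitone σ ∧ (∀ i, min n m ≤ i → σ i = 0) ∧
  O = X * svdDiag n m σ * Y

open scoped Matrix.Norms.L2Operator

section svdDiag

variable {n m : ℕ}

lemma svdDiag_smul (c : ℝ) (σ : ℕ → ℝ) : svdDiag n m (c • σ) = c • svdDiag n m σ := by
  ext i j
  by_cases h : (i : ℕ) = j <;> simp [svdDiag, h]

lemma svdDiag_mul_svdDiagPinv (σ τ : ℕ → ℝ) :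
    svdDiag n m σ * svdDiagPinv n m τ =
      diagonal fun i : Fin n => if (i : ℕ) < m then (σ i * (τ i)⁻¹ : ℂ) else 0 := by
  ext i j
  rw [mul_apply, diagonal_apply]
  by_cases hi : (i : ℕ) < m
  · rw [Finset.sum_eq_single ⟨i, hi⟩
      (fun k _ hk => by simp [svdDiag, Ne.symm (Fin.val_ne_of_ne hk)]) (by simp)]
    by_cases hij : i = j
    · subst hij
      simp [svdDiag, svdDiagPinv, hi]
    · simp [svdDiag, svdDiagPinv, hij, Fin.val_inj]
  · refine (Finset.sum_eq_zero fun k _ => ?_).trans (by simp [hi])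
    have : (i : ℕ) ≠ k := fun h => hi (h ▸ k.isLt)
    simp [svdDiag, this]

lemma norm_svdDiag_mul_svdDiagPinv_le_one {σ τ : ℕ → ℝ} (h : ∀ i, |σ i| ≤ |τ i|) :
    ‖svdDiag n m σ * svdDiagPinv n m τ‖ ≤ 1 := by
  rw [svdDiag_mul_svdDiagPinv, l2_opNorm_diagonal, pi_norm_le_iff_of_nonneg zero_le_one]
  intro i
  split_ifs
  · simp only [norm_mul, Complex.norm_real, Real.norm_eq_abs, abs_inv]
    exact mul_inv_le_one_of_le₀ (h i) (abs_nonneg _)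
  · simp

lemma svdDiag_mul_svdDiagPinv_mul_svdDiag {σ τ : ℕ → ℝ} (h : ∀ i, τ i = 0 → σ i = 0) :
    svdDiag n m σ * svdDiagPinv n m τ * svdDiag n m τ = svdDiag n m σ := by
  ext i j
  rw [svdDiag_mul_svdDiagPinv, diagonal_mul]
  by_cases hij : (i : ℕ) = j
  · simp only [svdDiag, of_apply, hij, if_true, j.isLt]
    rcases eq_or_ne (τ j) 0 with hτ | hτ
    · simp [hτ, h _ hτ]
    · simp [hτ]
  · simp [svdDiag, hij]

end svdDiag

/-- **Probabilistic step of the protocol.** Given SVDs `Q = X_Q Σ_Q Y_Q`, `B = X_B Σ_B Y_B` and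
`p > 0` with `σᵢ(Q)² ≥ p σᵢ(B)²` for all `i`, the matrix `N = √p X_B Σ_B Σ_Q‡ X_Q†` is a
contraction and, with the unitary `V` defined by `Vᵀ = Y_Q† Y_B`, one has `N Q Vᵀ = √p B`,
i.e. `(N ⊗ V)|Q⟩⟩ = √p |B⟩⟩`: a pure LOCC transformation of `|Q⟩⟩` into `|B⟩⟩` with
probability `p`. -/
theorem probabilistic_step {n m : ℕ} (Q B : Matrix (Fin n) (Fin m) ℂ)
    (XQ : Matrix (Fin n) (Fin n) ℂ) (σQ : ℕ → ℝ) (YQ : Matrix (Fin m) (Fin m) ℂ)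
    (hQ : IsSVD Q XQ σQ YQ)
    (XB : Matrix (Fin n) (Fin n) ℂ) (σB : ℕ → ℝ) (YB : Matrix (Fin m) (Fin m) ℂ)
    (hB : IsSVD B XB σB YB)
    (p : ℝ) (hp : 0 < p) (hσ : ∀ i, p * σB i ^ 2 ≤ σQ i ^ 2)
    (N : Matrix (Fin n) (Fin n) ℂ)
    (hN : N = Real.sqrt p • (XB * svdDiag n m σB * svdDiagPinv n m σQ * XQᴴ))
    (V : Matrix (Fin m) (Fin m) ℂ) (hV : Vᵀ = YQᴴ * YB) :
    IsContraction N ∧ V ∈ Matrix.unitaryGroup (Fin m) ℂ ∧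
    N * Q * Vᵀ = Real.sqrt p • B := by
  obtain ⟨hXQ, hYQ, -, -, -, rfl⟩ := hQ
  obtain ⟨hXB, hYB, -, -, -, rfl⟩ := hB
  have hle : ∀ i, |√p * σB i| ≤ |σQ i| := fun i =>
    sq_le_sq.mp (by rw [mul_pow, Real.sq_sqrt hp.le]; exact hσ i)
  set D := svdDiag n m (√p • σB) * svdDiagPinv n m σQ
  have hN' : N = XB * D * XQᴴ := by
    simp only [hN, D, svdDiag_smul, Matrix.smul_mul, Matrix.mul_smul, Matrix.mul_assoc]
  refine ⟨?_, ?_, ?_⟩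
  · have hXQs : XQᴴ ∈ unitaryGroup (Fin n) ℂ := Unitary.star_mem hXQ
    rw [IsContraction, ← cstar_norm_def, hN', CStarRing.norm_mul_mem_unitary _ hXQs,
      CStarRing.norm_mem_unitary_mul _ hXB]
    exact norm_svdDiag_mul_svdDiagPinv_le_one hle
  · rw [← transpose_mem_unitaryGroup_iff, hV]
    exact mul_mem (Unitary.star_mem hYQ) hYB
  · have hD : D * svdDiag n m σQ = svdDiag n m (√p • σB) :=
      svdDiag_mul_svdDiagPinv_mul_svdDiag fun i hi =>
        abs_nonpos_iff.mp <| (hle i).trans_eq (by rw [hi, abs_zero])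
    have hXQ' : XQᴴ * XQ = 1 := Unitary.star_mul_self_of_mem hXQ
    have hYQ' : YQ * YQᴴ = 1 := Unitary.mul_star_self_of_mem hYQ
    calc N * (XQ * svdDiag n m σQ * YQ) * Vᵀ
        = XB * D * (XQᴴ * XQ) * svdDiag n m σQ * (YQ * YQᴴ) * YB := by
          simp only [hN', hV, Matrix.mul_assoc]
      _ = XB * (D * svdDiag n m σQ) * YB := by
          rw [hXQ', hYQ', Matrix.mul_one, Matrix.mul_one, Matrix.mul_assoc XB]
      _ = √p • (XB * svdDiag n m σB * YB) := by
          rw [hD, svdDiag_smul, Matrix.mul_smul, Matrix.smul_mul]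
end
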